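/- Let γ₁, γ₂ > 0 and τ ≥ 0. Let X ~ Exp(γ₁), Y ~ Exp(γ₂), and let Z be a nonnegative random variable, with X, Y, Z mutually independent. Then P( X/(Y + Z + 1) ≥ τ ) = E[ exp(−τ(Z+1)/γ₁) ] / ( (γ₂/γ₁)·τ + 1 ). -/

import Mathlib

open MeasureTheory ProbabilityTheory
open Real Set
open scoped ENNReal


lemma expMeasure_Iio_zero {r : ℝ} : expMeasure r (Iio 0) = 0 := by
  rw [expMeasure, gammaMeasure, withDensity_apply _ measurableSet_Iio]
  exact lintegral_gammaPDF_of_nonpos le_rfl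

lemma expMeasure_Ici {r t : ℝ} (hr : 0 < r) (ht : 0 ≤ t) :
    expMeasure r (Ici t) = ENNReal.ofReal (rexp (-(r * t))) := by
  haveI := isProbabilityMeasure_expMeasure hr
  have hsingleton : expMeasure r {t} = 0 := by
    rw [expMeasure, gammaMeasure]
    exact withDensity_absolutelyContinuous _ _ (measure_singleton t)
  have hIic : expMeasure r (Iic t) = ENNReal.ofReal (1 - rexp (-(r * t))) := by
    rw [expMeasure, gammaMeasure, withDensity_apply _ measurableSet_Iic]
    have := lintegral_exponentialPDF_eq_antiDeriv hr t
    rw [if_pos ht] at this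
    simpa [exponentialPDF, exponentialPDFReal, gammaPDF] using this
  have hIio : expMeasure r (Iio t) = ENNReal.ofReal (1 - rexp (-(r * t))) := by
    have : expMeasure r (Iic t) = expMeasure r (Iio t) + expMeasure r {t} := by
      rw [← measure_union (by simp) (measurableSet_singleton t)]
      congr 1
      exact Set.Iio_union_right.symm
    rw [hsingleton, add_zero] at this
    rw [← this, hIic]
  have : (Iio t)ᶜ = Ici t := compl_Iio
  rw [← this, measure_compl measurableSet_Iio (measure_ne_top _ _), hIio, measure_univ]
  have he : rexp (-(r * t)) ≤ 1 := by
    rw [exp_le_one_iff]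
    simp only [Left.neg_nonpos_iff]
    positivity
  rw [← ENNReal.ofReal_one, ← ENNReal.ofReal_sub _ (by linarith [exp_pos (-(r*t))])]
  ring_nf

lemma expMeasure_laplace {r c : ℝ} (hr : 0 < r) (hc : 0 ≤ c) :
    ∫⁻ x, ENNReal.ofReal (rexp (-(c * x))) ∂(expMeasure r)
      = ENNReal.ofReal (r / (r + c)) := by
  have hm : Measurable (gammaPDF 1 r) := (measurable_gammaPDFReal 1 r).ennreal_ofReal
  rw [expMeasure, gammaMeasure, lintegral_withDensity_eq_lintegral_mul _ hm (by fun_prop)]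
  have key : ∀ x : ℝ, (gammaPDF 1 r * fun x => ENNReal.ofReal (rexp (-(c * x)))) x
      = ENNReal.ofReal (r / (r + c)) * exponentialPDF (r + c) x := by
    intro x
    show gammaPDF 1 r x * ENNReal.ofReal (rexp (-(c * x))) = _
    have h1 : gammaPDF 1 r x = exponentialPDF r x := rfl
    rw [h1]
    rcases le_or_gt 0 x with hx | hx
    · rw [exponentialPDF_of_nonneg hx, exponentialPDF_of_nonneg hx,
        ← ENNReal.ofReal_mul (by positivity), ← ENNReal.ofReal_mul (by positivity)]
      congr 1
      have hrc : r + c > 0 := by linarith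
      rw [mul_assoc, ← Real.exp_add, show -(r*x) + -(c*x) = -((r+c)*x) by ring]
      field_simp
    · rw [exponentialPDF_of_neg hx, exponentialPDF_of_neg hx, zero_mul, mul_zero]
  have hm2 : Measurable (exponentialPDF (r + c)) :=
    (measurable_exponentialPDFReal (r + c)).ennreal_ofReal
  rw [lintegral_congr key, lintegral_const_mul _ hm2,
    lintegral_exponentialPDF_eq_one (by linarith), mul_one]


theorem stmt_17 {Ω : Type*} [MeasurableSpace Ω] (μ : Measure Ω) [IsProbabilityMeasure μ]
    (γ₁ γ₂ τ : ℝ) (hγ₁ : 0 < γ₁) (hγ₂ : 0 < γ₂) (hτ : 0 ≤ τ)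
    (X Y Z : Ω → ℝ) (hXm : Measurable X) (hYm : Measurable Y) (hZm : Measurable Z)
    (hX : Measure.map X μ = expMeasure (1 / γ₁))
    (hY : Measure.map Y μ = expMeasure (1 / γ₂))
    (hZ : ∀ ω, 0 ≤ Z ω)
    (hindep : iIndepFun ![X, Y, Z] μ) :
    (μ {ω | τ ≤ X ω / (Y ω + Z ω + 1)}).toReal
      = (∫ ω, Real.exp (-τ * (Z ω + 1) / γ₁) ∂μ) / ((γ₂ / γ₁) * τ + 1) := by
  have hl1 : (0:ℝ) < 1 / γ₁ := by positivity
  have hl2 : (0:ℝ) < 1 / γ₂ := by positivity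
  have hmeas3 : ∀ i, Measurable (![X, Y, Z] i) := by
    intro i; fin_cases i <;> assumption
  -- Y is a.e. nonnegative
  have hYae : ∀ᵐ ω ∂μ, 0 ≤ Y ω := by
    rw [ae_iff]
    have h0 : {ω | ¬ 0 ≤ Y ω} = Y ⁻¹' (Iio 0) := by
      ext ω; simp [not_le]
    rw [h0, ← Measure.map_apply hYm measurableSet_Iio, hY, expMeasure_Iio_zero]
  -- rewrite the event
  have hset : μ {ω | τ ≤ X ω / (Y ω + Z ω + 1)} = μ {ω | τ * (Y ω + Z ω + 1) ≤ X ω} := by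
    apply measure_congr
    rw [Filter.eventuallyEq_set]
    filter_upwards [hYae] with ω hYω
    have hD : 0 < Y ω + Z ω + 1 := by have := hZ ω; linarith
    exact le_div_iff₀ hD
  -- independence of (Y,Z) and X
  have hYZX : IndepFun (fun ω => (Y ω, Z ω)) X μ :=
    hindep.indepFun_prodMk hmeas3 1 2 0 (by decide) (by decide)
  have hmap : μ.map (fun ω => ((Y ω, Z ω), X ω))
      = (μ.map (fun ω => (Y ω, Z ω))).prod (μ.map X) :=
    (indepFun_iff_map_prod_eq_prod_map_map
      ((hYm.prodMk hZm).aemeasurable) hXm.aemeasurable).1 hYZX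
  set ν := μ.map (fun ω => (Y ω, Z ω)) with hν
  have hsetm : MeasurableSet {p : (ℝ × ℝ) × ℝ | τ * (p.1.1 + p.1.2 + 1) ≤ p.2} :=
    measurableSet_le (by fun_prop) (by fun_prop)
  have h2 : μ {ω | τ * (Y ω + Z ω + 1) ≤ X ω}
      = ∫⁻ w : ℝ × ℝ, ENNReal.ofReal (rexp (-(1 / γ₁ * (τ * (w.1 + w.2 + 1))))) ∂ν := by
    have hpre : {ω | τ * (Y ω + Z ω + 1) ≤ X ω}
        = (fun ω => ((Y ω, Z ω), X ω)) ⁻¹' {p : (ℝ × ℝ) × ℝ | τ * (p.1.1 + p.1.2 + 1) ≤ p.2} :=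
      rfl
    rw [hpre, ← Measure.map_apply ((hYm.prodMk hZm).prodMk hXm) hsetm, hmap,
      Measure.prod_apply hsetm, hX]
    apply lintegral_congr_ae
    have hms : MeasurableSet {w : ℝ × ℝ | 0 ≤ w.1 ∧ 0 ≤ w.2} := by
      apply MeasurableSet.inter
      · exact measurableSet_le measurable_const measurable_fst
      · exact measurableSet_le measurable_const measurable_snd
    have hνae : ∀ᵐ w : ℝ × ℝ ∂ν, 0 ≤ w.1 ∧ 0 ≤ w.2 := by
      rw [hν, ae_map_iff (hYm.prodMk hZm).aemeasurable hms]
      filter_upwards [hYae] with ω h using ⟨h, hZ ω⟩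
    filter_upwards [hνae] with w hw
    have hpre2 : (Prod.mk w ⁻¹' {p : (ℝ × ℝ) × ℝ | τ * (p.1.1 + p.1.2 + 1) ≤ p.2})
        = Set.Ici (τ * (w.1 + w.2 + 1)) := rfl
    rw [hpre2, expMeasure_Ici hl1 (by nlinarith [hw.1, hw.2])]
  have h3 : ∫⁻ w : ℝ × ℝ, ENNReal.ofReal (rexp (-(1 / γ₁ * (τ * (w.1 + w.2 + 1))))) ∂ν
      = ∫⁻ ω, ENNReal.ofReal (rexp (-(1 / γ₁ * (τ * (Y ω + Z ω + 1))))) ∂μ :=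
    lintegral_map (by fun_prop) (hYm.prodMk hZm)
  -- split the exponential into Y-part and Z-part
  set fY : Ω → ℝ≥0∞ := fun ω => ENNReal.ofReal (rexp (-(1 / γ₁ * τ * Y ω))) with hfY
  set fZ : Ω → ℝ≥0∞ := fun ω => ENNReal.ofReal (rexp (-τ * (Z ω + 1) / γ₁)) with hfZ
  have hsplit : (fun ω => ENNReal.ofReal (rexp (-(1 / γ₁ * (τ * (Y ω + Z ω + 1)))))) = fY * fZ := by
    funext ω
    simp only [hfY, hfZ, Pi.mul_apply]
    rw [← ENNReal.ofReal_mul (Real.exp_pos _).le, ← Real.exp_add]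
    congr 1
    field_simp
    ring
  have hfYm : Measurable fY := by fun_prop
  have hfZm : Measurable fZ := by fun_prop
  have hff : IndepFun fY fZ μ := by
    have hYZ : IndepFun Y Z μ := hindep.indepFun (show (1 : Fin 3) ≠ 2 by decide)
    have hphi : Measurable fun y : ℝ => ENNReal.ofReal (rexp (-(1 / γ₁ * τ * y))) := by fun_prop
    have hpsi : Measurable fun z : ℝ => ENNReal.ofReal (rexp (-τ * (z + 1) / γ₁)) := by fun_prop
    exact hYZ.comp hphi hpsi
  have h4 : ∫⁻ ω, (fY * fZ) ω ∂μ = (∫⁻ ω, fY ω ∂μ) * ∫⁻ ω, fZ ω ∂μ :=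
    lintegral_mul_eq_lintegral_mul_lintegral_of_indepFun hfYm hfZm hff
  -- the Y Laplace transform
  have h5 : ∫⁻ ω, fY ω ∂μ = ENNReal.ofReal ((1 / γ₂) / (1 / γ₂ + 1 / γ₁ * τ)) := by
    have hphi : Measurable fun y : ℝ => ENNReal.ofReal (rexp (-(1 / γ₁ * τ * y))) := by fun_prop
    have : ∫⁻ ω, fY ω ∂μ = ∫⁻ y, ENNReal.ofReal (rexp (-(1 / γ₁ * τ * y))) ∂(μ.map Y) :=
      (lintegral_map hphi hYm).symm
    rw [this, hY, expMeasure_laplace hl2 (by positivity)]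
  -- the Z side
  have hfZ_le : ∫⁻ ω, fZ ω ∂μ ≤ 1 := by
    calc ∫⁻ ω, fZ ω ∂μ ≤ ∫⁻ _, 1 ∂μ := by
          apply lintegral_mono
          intro ω
          simp only [hfZ]
          rw [show (1:ℝ≥0∞) = ENNReal.ofReal 1 by simp]
          apply ENNReal.ofReal_le_ofReal
          rw [Real.exp_le_one_iff]
          have := hZ ω
          rw [div_nonpos_iff]
          right
          constructor
          · nlinarith
          · linarith
      _ = 1 := by simp
  have hfZ_ne_top : ∫⁻ ω, fZ ω ∂μ ≠ ⊤ := (lt_of_le_of_lt hfZ_le (by simp)).ne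
  have hE : ∫ ω, rexp (-τ * (Z ω + 1) / γ₁) ∂μ = (∫⁻ ω, fZ ω ∂μ).toReal := by
    have hsm : AEStronglyMeasurable (fun ω => rexp (-τ * (Z ω + 1) / γ₁)) μ :=
      (Real.measurable_exp.comp (show Measurable fun ω => -τ * (Z ω + 1) / γ₁ by fun_prop)).aestronglyMeasurable
    rw [integral_eq_lintegral_of_nonneg_ae
      (Filter.Eventually.of_forall fun ω => (Real.exp_pos _).le) hsm]
  -- assemble
  rw [hset, h2, h3, hsplit, h4, h5, hE, ENNReal.toReal_mul, ENNReal.toReal_ofReal (by positivity)]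
  set L := (∫⁻ ω, fZ ω ∂μ).toReal
  have hd : (0:ℝ) < (γ₂ / γ₁) * τ + 1 := by positivity
  rw [eq_div_iff hd.ne']
  have hden : (0:ℝ) < 1 / γ₂ + 1 / γ₁ * τ := by positivity
  have hc : (1 / γ₂) / (1 / γ₂ + 1 / γ₁ * τ) * ((γ₂ / γ₁) * τ + 1) = 1 := by
    field_simp
    ring
  calc (1 / γ₂) / (1 / γ₂ + 1 / γ₁ * τ) * L * ((γ₂ / γ₁) * τ + 1)
      = (1 / γ₂) / (1 / γ₂ + 1 / γ₁ * τ) * ((γ₂ / γ₁) * τ + 1) * L := by ring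
    _ = L := by rw [hc, one_mul]
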